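/- arXiv:2509.13653 — 2 statements merged into one kernel-verified Lean document; each statement's English description precedes it below -/
import Mathlib

section
/- Let (x̂, ŷ) be the saddle point of the SCCP with weight μ > 0 and reference σ^r. Consider the RTRM+ dynamics: initialize x¹ ∈ Δ^n, y¹ ∈ Δ^m arbitrarily and cumulative regrets R_x⁰ = 0 ∈ ℝ^n, R_y⁰ = 0 ∈ ℝ^m; for t ≥ 1 set ℓ_x^t = −U y^t + μ(x^t − x^r), ℓ_y^t = Uᵀ x^t + μ(y^t − y^r), r_x^t = ⟨ℓ_x^t, x^t⟩·𝟏 − ℓ_x^t, r_y^t = ⟨ℓ_y^t, y^t⟩·𝟏 − ℓ_y^t, R_x^t = [R_x^{t−1} + r_x^t]_+, R_y^t = [R_y^{t−1} + r_y^t]_+ (componentwise positive part), and x^{t+1} = R_x^t/‖R_x^t‖₁ if ‖R_x^t‖₁ > 0 and x^{t+1} = (1/n)·𝟏 otherwise (analogously for y^{t+1}). Then there exists a constant C > 0, depending only on U, μ, σ^r and the initialization, such that for every T ≥ 1 there exists some t with 1 ≤ t ≤ T and ‖(x̂, ŷ) − (x^t, y^t)‖₂ ≤ C/√T. -/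
/-!
Let `σ̂` be the saddle point and `r̂` the immediate regrets at `σ̂`; first-order optimality makes
`r̂ ≤ 0`. Strong monotonicity of the regularized game gives `⟨rᵗ, σ̂⟩ ≥ μ ‖σᵗ - σ̂‖²`, and for RM+
the previous cumulative regret `Rᵗ⁻¹` is a nonnegative multiple of `σᵗ`, so `⟨rᵗ, Rᵗ⁻¹⟩ = 0`.
Hence the potential `‖Rᵗ - θ σ̂‖² + 2c ∑_{r̂ᵢ < 0} Rᵗᵢ` drops by `2θ ⟨rᵗ, σ̂⟩` at each step, up to an
error `B ‖σᵗ - σ̂‖²`: where `r̂ᵢ = 0`, `rᵗᵢ` is itself `O(‖σᵗ - σ̂‖)`, and where `r̂ᵢ < 0` the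
truncation at `0` absorbs `(rᵗᵢ)²` unless `σᵗ` is far from `σ̂`. With `θ = (B + 1) / μ` this bounds
`∑ₜ ‖σᵗ - σ̂‖²` by a constant `K`, so some `t ≤ T` has `‖σᵗ - σ̂‖² ≤ K / T`.
-/

open Finset

/-- Squared Euclidean norm of a vector. -/
noncomputable def sqnorm {k : ℕ} (v : Fin k → ℝ) : ℝ := ∑ i, (v i) ^ 2

/-- Euclidean norm of a concatenated profile vector in ℝ^(k+l). -/
noncomputable def pnorm {k l : ℕ} (v : Fin k → ℝ) (w : Fin l → ℝ) : ℝ :=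
  Real.sqrt (sqnorm v + sqnorm w)

/-- Bilinear payoff xᵀUy. -/
def payoff {k l : ℕ} (U : Matrix (Fin k) (Fin l) ℝ) (x : Fin k → ℝ) (y : Fin l → ℝ) : ℝ :=
  ∑ i, ∑ j, x i * U i j * y j

/-- Regularized SCCP objective G(x,y) = -xᵀUy + μ/2 ‖x - xʳ‖² - μ/2 ‖y - yʳ‖². -/
noncomputable def sccpObj {k l : ℕ} (U : Matrix (Fin k) (Fin l) ℝ) (μ : ℝ)
    (xr : Fin k → ℝ) (yr : Fin l → ℝ) (x : Fin k → ℝ) (y : Fin l → ℝ) : ℝ :=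
  -(payoff U x y) + μ / 2 * sqnorm (x - xr) - μ / 2 * sqnorm (y - yr)

/-- (x̂, ŷ) is a saddle point of the SCCP with weight μ and reference (xr, yr). -/
def IsSaddle {k l : ℕ} (U : Matrix (Fin k) (Fin l) ℝ) (μ : ℝ)
    (xr : Fin k → ℝ) (yr : Fin l → ℝ) (xh : Fin k → ℝ) (yh : Fin l → ℝ) : Prop :=
  xh ∈ stdSimplex ℝ (Fin k) ∧ yh ∈ stdSimplex ℝ (Fin l) ∧
  (∀ y ∈ stdSimplex ℝ (Fin l), sccpObj U μ xr yr xh y ≤ sccpObj U μ xr yr xh yh) ∧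
  (∀ x ∈ stdSimplex ℝ (Fin k), sccpObj U μ xr yr xh yh ≤ sccpObj U μ xr yr x yh)

/-- (x*, y*) is a Nash equilibrium of the zero-sum game with payoff matrix U. -/
def IsNash {k l : ℕ} (U : Matrix (Fin k) (Fin l) ℝ)
    (xs : Fin k → ℝ) (ys : Fin l → ℝ) : Prop :=
  xs ∈ stdSimplex ℝ (Fin k) ∧ ys ∈ stdSimplex ℝ (Fin l) ∧
  (∀ x ∈ stdSimplex ℝ (Fin k), payoff U x ys ≤ payoff U xs ys) ∧
  (∀ y ∈ stdSimplex ℝ (Fin l), payoff U xs ys ≤ payoff U xs y)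

/-- Exploitability ε(σ) = max_{x'} x'ᵀUy - min_{y'} xᵀUy'. -/
noncomputable def exploit {k l : ℕ} (U : Matrix (Fin k) (Fin l) ℝ)
    (x : Fin k → ℝ) (y : Fin l → ℝ) : ℝ :=
  sSup ((fun x' => payoff U x' y) '' stdSimplex ℝ (Fin k)) -
  sInf ((fun y' => payoff U x y') '' stdSimplex ℝ (Fin l))

/-- Transformed loss for the x-player: ℓ_x = -Uy + μ(x - xʳ). -/
noncomputable def lossX {k l : ℕ} (U : Matrix (Fin k) (Fin l) ℝ) (μ : ℝ)
    (xr : Fin k → ℝ) (x : Fin k → ℝ) (y : Fin l → ℝ) : Fin k → ℝ :=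
  fun i => -(∑ j, U i j * y j) + μ * (x i - xr i)

/-- Transformed loss for the y-player: ℓ_y = Uᵀx + μ(y - yʳ). -/
noncomputable def lossY {k l : ℕ} (U : Matrix (Fin k) (Fin l) ℝ) (μ : ℝ)
    (yr : Fin l → ℝ) (x : Fin k → ℝ) (y : Fin l → ℝ) : Fin l → ℝ :=
  fun j => (∑ i, U i j * x i) + μ * (y j - yr j)

/-- Immediate regret r = ⟨ℓ, p⟩·𝟏 - ℓ. -/
noncomputable def imRegret {k : ℕ} (ℓ : Fin k → ℝ) (p : Fin k → ℝ) : Fin k → ℝ :=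
  fun i => (∑ i', ℓ i' * p i') - ℓ i


lemma sum_abs_eq_one_of_mem_stdSimplex {ι : Type*} [Fintype ι] {p : ι → ℝ}
    (hp : p ∈ stdSimplex ℝ ι) :
    ∑ i, |p i| = 1 := by
  rw [← hp.2]
  exact sum_congr rfl fun i _ => abs_of_nonneg (hp.1 i)

lemma sqnorm_nonneg {k : ℕ} (v : Fin k → ℝ) : 0 ≤ sqnorm v :=
  sum_nonneg fun _ _ => sq_nonneg _

lemma sqnorm_le_one_of_mem_stdSimplex {k : ℕ} {p : Fin k → ℝ} (hp : p ∈ stdSimplex ℝ (Fin k)) :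
    sqnorm p ≤ 1 := by
  rw [← hp.2]
  refine sum_le_sum fun i _ => ?_
  obtain ⟨h0, h1⟩ := mem_Icc_of_mem_stdSimplex hp i
  nlinarith

lemma sqnorm_sub_comm {k : ℕ} (v w : Fin k → ℝ) : sqnorm (v - w) = sqnorm (w - v) :=
  sum_congr rfl fun i _ => by simp only [Pi.sub_apply]; ring

lemma abs_sub_le_one_of_mem_stdSimplex {ι : Type*} [Fintype ι] {p q : ι → ℝ}
    (hp : p ∈ stdSimplex ℝ ι) (hq : q ∈ stdSimplex ℝ ι) (i : ι) :
    |p i - q i| ≤ 1 := by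
  obtain ⟨hp0, hp1⟩ := mem_Icc_of_mem_stdSimplex hp i
  obtain ⟨hq0, hq1⟩ := mem_Icc_of_mem_stdSimplex hq i
  exact abs_sub_le_iff.mpr ⟨by linarith, by linarith⟩

lemma abs_sum_mul_le {ι : Type*} [Fintype ι] {a : ι → ℝ} {c : ℝ} (ha : ∀ i, |a i| ≤ c)
    (v : ι → ℝ) :
    |∑ i, a i * v i| ≤ c * ∑ i, |v i| := by
  calc |∑ i, a i * v i| ≤ ∑ i, |a i| * |v i| := by
        simpa only [abs_mul] using abs_sum_le_sum_abs (fun i => a i * v i) univ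
    _ ≤ ∑ i, c * |v i| := sum_le_sum fun i _ => mul_le_mul_of_nonneg_right (ha i) (abs_nonneg _)
    _ = c * ∑ i, |v i| := (mul_sum _ _ _).symm

lemma abs_le_sum_sum_abs {n m : ℕ} (U : Matrix (Fin n) (Fin m) ℝ) (i : Fin n) (j : Fin m) :
    |U i j| ≤ ∑ i, ∑ j, |U i j| :=
  (single_le_sum (f := fun j => |U i j|) (fun _ _ => abs_nonneg _) (mem_univ j)).trans
    (single_le_sum (f := fun i => ∑ j, |U i j|) (fun _ _ => sum_nonneg fun _ _ => abs_nonneg _)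
      (mem_univ i))

lemma sq_sum_abs_add_sum_abs_le {k l : ℕ} (v : Fin k → ℝ) (w : Fin l → ℝ) :
    (∑ i, |v i| + ∑ j, |w j|) ^ 2 ≤ 2 * (k + l) * (sqnorm v + sqnorm w) := by
  have hv : (∑ i, |v i|) ^ 2 ≤ k * sqnorm v := by
    simpa [sqnorm, sq_abs] using sq_sum_le_card_mul_sum_sq (s := univ) (f := fun i => |v i|)
  have hw : (∑ j, |w j|) ^ 2 ≤ l * sqnorm w := by
    simpa [sqnorm, sq_abs] using sq_sum_le_card_mul_sum_sq (s := univ) (f := fun j => |w j|)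
  have hv0 := sqnorm_nonneg v
  have hw0 := sqnorm_nonneg w
  have hk : (0 : ℝ) ≤ k := k.cast_nonneg
  have hl : (0 : ℝ) ≤ l := l.cast_nonneg
  nlinarith [sq_nonneg (∑ i, |v i| - ∑ j, |w j|)]

section imRegret

variable {k : ℕ}

lemma sum_imRegret_mul (ℓ p : Fin k → ℝ) {q : Fin k → ℝ} (hq : ∑ i, q i = 1) :
    ∑ i, imRegret ℓ p i * q i = ∑ i, ℓ i * (p i - q i) := by
  simp only [imRegret, sub_mul, mul_sub, sum_sub_distrib, ← mul_sum, hq, mul_one]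

lemma sum_imRegret_mul_self (ℓ : Fin k → ℝ) {p : Fin k → ℝ} (hp : ∑ i, p i = 1) :
    ∑ i, imRegret ℓ p i * p i = 0 := by
  simp [sum_imRegret_mul ℓ p hp]

lemma imRegret_nonpos_of_forall {ℓ p : Fin k → ℝ}
    (h : ∀ v ∈ stdSimplex ℝ (Fin k), 0 ≤ ∑ i, ℓ i * (v i - p i)) (i : Fin k) :
    imRegret ℓ p i ≤ 0 := by
  set v : Fin k → ℝ := Pi.single i 1
  have hv : v ∈ stdSimplex ℝ (Fin k) := single_mem_stdSimplex ℝ i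
  have key : ∑ j, imRegret ℓ p j * v j = imRegret ℓ p i := by simp [v, Pi.single_apply]
  rw [sum_imRegret_mul ℓ p hv.2] at key
  have hneg : ∑ j, ℓ j * (p j - v j) = -∑ j, ℓ j * (v j - p j) := by
    rw [← sum_neg_distrib]; exact sum_congr rfl fun j _ => by ring
  linarith [h v hv]

lemma abs_imRegret_le {ℓ p : Fin k → ℝ} {c : ℝ} (hℓ : ∀ i, |ℓ i| ≤ c)
    (hp : p ∈ stdSimplex ℝ (Fin k)) (i : Fin k) : |imRegret ℓ p i| ≤ 2 * c := by
  have h := abs_sum_mul_le hℓ p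
  rw [sum_abs_eq_one_of_mem_stdSimplex hp, mul_one] at h
  calc |imRegret ℓ p i| ≤ |∑ j, ℓ j * p j| + |ℓ i| := abs_sub _ _
    _ ≤ 2 * c := by linarith [hℓ i]

lemma abs_imRegret_sub_le {ℓ ℓ' p p' : Fin k → ℝ} {B c : ℝ} (hℓ : ∀ i, |ℓ i - ℓ' i| ≤ B)
    (hℓ' : ∀ i, |ℓ' i| ≤ c) (hp : p ∈ stdSimplex ℝ (Fin k)) (i : Fin k) :
    |imRegret ℓ p i - imRegret ℓ' p' i| ≤ 2 * B + c * ∑ j, |p j - p' j| := by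
  have hsplit : imRegret ℓ p i - imRegret ℓ' p' i
      = (∑ j, (ℓ j - ℓ' j) * p j + ∑ j, ℓ' j * (p j - p' j)) - (ℓ i - ℓ' i) := by
    simp only [imRegret, ← sum_add_distrib]
    rw [sub_sub_sub_comm, ← sum_sub_distrib]
    congr 1
    exact sum_congr rfl fun j _ => by ring
  have h1 := abs_sum_mul_le hℓ p
  rw [sum_abs_eq_one_of_mem_stdSimplex hp, mul_one] at h1
  have h2 := abs_sum_mul_le hℓ' (p - p')
  simp only [Pi.sub_apply] at h2
  rw [hsplit]
  calc _ ≤ |∑ j, (ℓ j - ℓ' j) * p j + ∑ j, ℓ' j * (p j - p' j)| + |ℓ i - ℓ' i| := abs_sub _ _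
    _ ≤ |∑ j, (ℓ j - ℓ' j) * p j| + |∑ j, ℓ' j * (p j - p' j)| + |ℓ i - ℓ' i| := by
        gcongr; exact abs_add_le _ _
    _ ≤ _ := by linarith [hℓ i]

end imRegret

lemma nonneg_of_forall_mul_add_sq_mul_nonneg {A B : ℝ}
    (h : ∀ s : ℝ, 0 < s → s ≤ 1 → 0 ≤ s * A + s ^ 2 * B) : 0 ≤ A := by
  have hlim : Filter.Tendsto (fun s : ℝ => A + s * B) (nhdsWithin 0 (Set.Ioi 0)) (nhds A) := by
    have : Continuous fun s : ℝ => A + s * B := by fun_prop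
    simpa using (this.tendsto 0).mono_left nhdsWithin_le_nhds
  refine ge_of_tendsto hlim ?_
  filter_upwards [Ioo_mem_nhdsGT (zero_lt_one' ℝ)] with s ⟨hs0, hs1⟩
  have := h s hs0 hs1.le
  rw [show s * A + s ^ 2 * B = s * (A + s * B) by ring] at this
  exact nonneg_of_mul_nonneg_right (a := s) (by linarith) hs0

section game

open scoped Matrix

variable {n m : ℕ} (U : Matrix (Fin n) (Fin m) ℝ) (μ : ℝ)

lemma payoff_eq_sum_mul_mulVec (x : Fin n → ℝ) (y : Fin m → ℝ) :
    payoff U x y = ∑ i, x i * (U *ᵥ y) i := by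
  simp only [payoff, Matrix.mulVec, dotProduct, mul_sum, mul_assoc]

lemma lossX_apply (xr x : Fin n → ℝ) (y : Fin m → ℝ) (i : Fin n) :
    lossX U μ xr x y i = -(U *ᵥ y) i + μ * (x i - xr i) := rfl

lemma payoff_neg_transpose (x : Fin n → ℝ) (y : Fin m → ℝ) :
    payoff (-Uᵀ) y x = -payoff U x y := by
  simp only [payoff, Matrix.neg_apply, Matrix.transpose_apply, ← sum_neg_distrib]
  rw [sum_comm]
  exact sum_congr rfl fun i _ => sum_congr rfl fun j _ => by ring

lemma sccpObj_neg_transpose (xr x : Fin n → ℝ) (yr y : Fin m → ℝ) :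
    sccpObj (-Uᵀ) μ yr xr y x = -sccpObj U μ xr yr x y := by
  simp only [sccpObj, payoff_neg_transpose]
  ring

lemma lossY_eq_lossX_neg_transpose (yr : Fin m → ℝ) (x : Fin n → ℝ) (y : Fin m → ℝ) :
    lossY U μ yr x y = lossX (-Uᵀ) μ yr y x := by
  ext j
  simp [lossX, lossY, Matrix.neg_apply, Matrix.transpose_apply]

variable {U μ}

/- The `y`-player of the game `U` is the `x`-player of the game `-Uᵀ`, so each statement about one
player is proved once, for `lossX`. -/
lemma IsSaddle.swap {xr xh : Fin n → ℝ} {yr yh : Fin m → ℝ}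
    (h : IsSaddle U μ xr yr xh yh) : IsSaddle (-Uᵀ) μ yr xr yh xh := by
  obtain ⟨hxh, hyh, hy, hx⟩ := h
  refine ⟨hyh, hxh, fun x hx' => ?_, fun y hy' => ?_⟩ <;>
    simp only [sccpObj_neg_transpose, neg_le_neg_iff]
  exacts [hx x hx', hy y hy']

variable (U μ)

lemma sccpObj_add_smul_sub (xr x v : Fin n → ℝ) (yr y : Fin m → ℝ) (s : ℝ) :
    sccpObj U μ xr yr (x + s • (v - x)) y - sccpObj U μ xr yr x y
      = s * ∑ i, lossX U μ xr x y i * (v i - x i) + s ^ 2 * (μ / 2 * sqnorm (v - x)) := by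
  simp only [sccpObj, payoff_eq_sum_mul_mulVec, lossX_apply, sqnorm, Pi.add_apply, Pi.smul_apply,
    Pi.sub_apply, smul_eq_mul, mul_sum, ← sum_neg_distrib, ← sum_add_distrib]
  rw [sub_sub_sub_cancel_right, ← sum_sub_distrib]
  exact sum_congr rfl fun i _ => by ring

lemma sum_lossX_sub_mul_sub (xr x x' : Fin n → ℝ) (y y' : Fin m → ℝ) :
    ∑ i, (lossX U μ xr x y i - lossX U μ xr x' y' i) * (x i - x' i)
      = μ * sqnorm (x - x') - payoff U (x - x') (y - y') := by
  simp only [lossX_apply, payoff_eq_sum_mul_mulVec, Matrix.mulVec_sub, sqnorm, Pi.sub_apply,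
    mul_sum, ← sum_sub_distrib]
  exact sum_congr rfl fun i _ => by ring

variable {U μ}

lemma IsSaddle.sum_lossX_mul_sub_nonneg {xr xh : Fin n → ℝ} {yr yh : Fin m → ℝ}
    (h : IsSaddle U μ xr yr xh yh) {v : Fin n → ℝ} (hv : v ∈ stdSimplex ℝ (Fin n)) :
    0 ≤ ∑ i, lossX U μ xr xh yh i * (v i - xh i) := by
  refine nonneg_of_forall_mul_add_sq_mul_nonneg (B := μ / 2 * sqnorm (v - xh)) fun s hs0 hs1 => ?_
  rw [← sccpObj_add_smul_sub U μ xr xh v yr yh s, sub_nonneg]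
  refine h.2.2.2 _ ?_
  convert convex_stdSimplex ℝ (Fin n) h.1 hv (sub_nonneg.2 hs1) hs0.le (by ring) using 1
  module

lemma IsSaddle.imRegret_lossX_nonpos {xr xh : Fin n → ℝ} {yr yh : Fin m → ℝ}
    (h : IsSaddle U μ xr yr xh yh) (i : Fin n) : imRegret (lossX U μ xr xh yh) xh i ≤ 0 :=
  imRegret_nonpos_of_forall (fun _ hv => h.sum_lossX_mul_sub_nonneg hv) i

lemma IsSaddle.sub_payoff_le_sum_imRegret_mul {xr xh x : Fin n → ℝ} {yr yh y : Fin m → ℝ}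
    (h : IsSaddle U μ xr yr xh yh) (hx : x ∈ stdSimplex ℝ (Fin n)) :
    μ * sqnorm (x - xh) - payoff U (x - xh) (y - yh)
      ≤ ∑ i, imRegret (lossX U μ xr x y) x i * xh i := by
  rw [sum_imRegret_mul _ _ h.1.2, ← sum_lossX_sub_mul_sub]
  have hsplit : ∑ i, lossX U μ xr x y i * (x i - xh i)
      = ∑ i, lossX U μ xr xh yh i * (x i - xh i)
        + ∑ i, (lossX U μ xr x y i - lossX U μ xr xh yh i) * (x i - xh i) := by
    rw [← sum_add_distrib]
    exact sum_congr rfl fun i _ => by ring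
  linarith [h.sum_lossX_mul_sub_nonneg hx]

lemma IsSaddle.mul_sqnorm_add_sqnorm_le {xr xh x : Fin n → ℝ} {yr yh y : Fin m → ℝ}
    (h : IsSaddle U μ xr yr xh yh) (hx : x ∈ stdSimplex ℝ (Fin n))
    (hy : y ∈ stdSimplex ℝ (Fin m)) :
    μ * (sqnorm (x - xh) + sqnorm (y - yh))
      ≤ ∑ i, imRegret (lossX U μ xr x y) x i * xh i
        + ∑ j, imRegret (lossY U μ yr x y) y j * yh j := by
  have hx' := h.sub_payoff_le_sum_imRegret_mul (y := y) hx
  have hy' := h.swap.sub_payoff_le_sum_imRegret_mul (y := x) hy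
  rw [payoff_neg_transpose, ← lossY_eq_lossX_neg_transpose] at hy'
  linarith

variable {M : ℝ}

lemma abs_mulVec_apply_le (hU : ∀ i j, |U i j| ≤ M) (v : Fin m → ℝ) (i : Fin n) :
    |(U *ᵥ v) i| ≤ M * ∑ j, |v j| :=
  abs_sum_mul_le (hU i) v

lemma abs_lossX_le (hU : ∀ i j, |U i j| ≤ M) (hμ : 0 ≤ μ) {xr x : Fin n → ℝ} {y : Fin m → ℝ}
    (hxr : xr ∈ stdSimplex ℝ (Fin n)) (hx : x ∈ stdSimplex ℝ (Fin n))
    (hy : y ∈ stdSimplex ℝ (Fin m)) (i : Fin n) : |lossX U μ xr x y i| ≤ M + μ := by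
  have h1 := abs_mulVec_apply_le hU y i
  rw [sum_abs_eq_one_of_mem_stdSimplex hy, mul_one] at h1
  have h2 := mul_le_mul_of_nonneg_left (abs_sub_le_one_of_mem_stdSimplex hx hxr i) hμ
  calc |lossX U μ xr x y i| ≤ |(U *ᵥ y) i| + μ * |x i - xr i| := by
        simpa only [lossX_apply, abs_neg, abs_mul, abs_of_nonneg hμ]
          using abs_add_le (-(U *ᵥ y) i) (μ * (x i - xr i))
    _ ≤ M + μ := by linarith

lemma abs_lossX_sub_le (hU : ∀ i j, |U i j| ≤ M) (hM : 0 ≤ M) (hμ : 0 ≤ μ)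
    (xr x x' : Fin n → ℝ) (y y' : Fin m → ℝ) (i : Fin n) :
    |lossX U μ xr x y i - lossX U μ xr x' y' i|
      ≤ (M + μ) * (∑ i, |x i - x' i| + ∑ j, |y j - y' j|) := by
  have h1 := abs_mulVec_apply_le hU (y - y') i
  have h2 : |x i - x' i| ≤ ∑ i, |x i - x' i| :=
    single_le_sum (f := fun i => |x i - x' i|) (fun _ _ => abs_nonneg _) (mem_univ i)
  have hx0 : 0 ≤ ∑ i, |x i - x' i| := sum_nonneg fun _ _ => abs_nonneg _
  have hy0 : 0 ≤ ∑ j, |y j - y' j| := sum_nonneg fun _ _ => abs_nonneg _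
  simp only [Pi.sub_apply] at h1
  calc |lossX U μ xr x y i - lossX U μ xr x' y' i|
      ≤ |(U *ᵥ (y - y')) i| + μ * |x i - x' i| := by
        have hsub : lossX U μ xr x y i - lossX U μ xr x' y' i
            = -(U *ᵥ (y - y')) i + μ * (x i - x' i) := by
          simp only [lossX_apply, Matrix.mulVec_sub, Pi.sub_apply]; ring
        simpa only [hsub, abs_neg, abs_mul, abs_of_nonneg hμ]
          using abs_add_le (-(U *ᵥ (y - y')) i) (μ * (x i - x' i))
    _ ≤ M * ∑ j, |y j - y' j| + μ * ∑ i, |x i - x' i| := by gcongr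
    _ ≤ (M + μ) * (∑ i, |x i - x' i| + ∑ j, |y j - y' j|) := by nlinarith

lemma sq_imRegret_lossX_sub_le (hU : ∀ i j, |U i j| ≤ M) (hM : 0 ≤ M) (hμ : 0 ≤ μ)
    {xr x xh : Fin n → ℝ} {y yh : Fin m → ℝ} (hxr : xr ∈ stdSimplex ℝ (Fin n))
    (hx : x ∈ stdSimplex ℝ (Fin n)) (hxh : xh ∈ stdSimplex ℝ (Fin n))
    (hyh : yh ∈ stdSimplex ℝ (Fin m)) (i : Fin n) :
    (imRegret (lossX U μ xr x y) x i - imRegret (lossX U μ xr xh yh) xh i) ^ 2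
      ≤ 18 * (n + m) * (M + μ) ^ 2 * (sqnorm (x - xh) + sqnorm (y - yh)) := by
  set D := ∑ i, |x i - xh i| + ∑ j, |y j - yh j|
  have hdiff := abs_imRegret_sub_le (p' := xh) (fun i => abs_lossX_sub_le hU hM hμ xr x xh y yh i)
    (fun i => abs_lossX_le hU hμ hxr hxh hyh i) hx i
  have hy0 : 0 ≤ ∑ j, |y j - yh j| := sum_nonneg fun _ _ => abs_nonneg _
  have hdiff' : |imRegret (lossX U μ xr x y) x i - imRegret (lossX U μ xr xh yh) xh i|
      ≤ 3 * (M + μ) * D := by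
    nlinarith
  have hD := sq_sum_abs_add_sum_abs_le (x - xh) (y - yh)
  simp only [Pi.sub_apply] at hD
  calc _ = |imRegret (lossX U μ xr x y) x i - imRegret (lossX U μ xr xh yh) xh i| ^ 2 :=
        (sq_abs _).symm
    _ ≤ (3 * (M + μ) * D) ^ 2 := pow_le_pow_left₀ (abs_nonneg _) hdiff' 2
    _ = 9 * (M + μ) ^ 2 * D ^ 2 := by ring
    _ ≤ 9 * (M + μ) ^ 2 * (2 * (n + m) * (sqnorm (x - xh) + sqnorm (y - yh))) := by gcongr
    _ = _ := by ring

end game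

lemma sq_max_sub_le {z q : ℝ} (hq : 0 ≤ q) : (max z 0 - q) ^ 2 ≤ (z - q) ^ 2 - min z 0 ^ 2 := by
  rcases le_or_gt 0 z with hz | hz
  · rw [max_eq_left hz, min_eq_right hz]; nlinarith
  · rw [max_eq_right hz.le, min_eq_left hz.le]; nlinarith

noncomputable def noiseWeight (c a : ℝ) : ℝ := if a < 0 then 12 * c ^ 2 / a ^ 2 else 1

lemma noiseWeight_nonneg (c a : ℝ) : 0 ≤ noiseWeight c a := by
  unfold noiseWeight
  split_ifs <;> positivity

/- If `r` is within `|rh| / 2` of `rh < 0`, it is negative and the truncation at `0` pays for `r ^ 2`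
through the linear term; otherwise `E > rh ^ 2 / 4` and the weight `12 c ^ 2 / rh ^ 2` pays for it. -/
lemma sq_sub_sq_min_le {Rp r rh c E : ℝ} (hRp : 0 ≤ Rp) (hr : |r| ≤ c) (hrh : rh ≤ 0)
    (hE : (r - rh) ^ 2 ≤ E) :
    r ^ 2 - min (Rp + r) 0 ^ 2
      ≤ (if rh < 0 then 2 * c * (Rp - max (Rp + r) 0) else 0) + noiseWeight c rh * E := by
  obtain ⟨hrc, hcr⟩ := abs_le.mp hr
  unfold noiseWeight
  split_ifs with hneg
  · by_cases hsmall : (r - rh) ^ 2 ≤ rh ^ 2 / 4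
    · have hr_neg : r ≤ rh / 2 := by nlinarith [sq_nonneg (r - rh + rh / 2)]
      have hw : 0 ≤ 12 * c ^ 2 / rh ^ 2 * E := by
        have : 0 ≤ E := le_trans (sq_nonneg _) hE
        positivity
      rcases le_or_gt 0 (Rp + r) with hz | hz
      · rw [max_eq_left hz, min_eq_right hz]; nlinarith
      · rw [max_eq_right hz.le, min_eq_left hz.le]; nlinarith
    · have hbig : 3 * c ^ 2 ≤ 12 * c ^ 2 / rh ^ 2 * E := by
        rw [div_mul_eq_mul_div, le_div_iff₀ (by nlinarith)]
        nlinarith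
      have hmax : max (Rp + r) 0 ≤ Rp + c := max_le (by linarith) (by linarith [abs_nonneg r])
      nlinarith [sq_nonneg (min (Rp + r) 0)]
  · have hrh0 : rh = 0 := le_antisymm hrh (not_lt.mp hneg)
    rw [hrh0, sub_zero] at hE
    nlinarith [sq_nonneg (min (Rp + r) 0)]

lemma rmPlus_coord_step {Rp r rh q c E : ℝ} (hq : 0 ≤ q) (hRp : 0 ≤ Rp) (hr : |r| ≤ c)
    (hrh : rh ≤ 0) (hE : (r - rh) ^ 2 ≤ E) :
    (max (Rp + r) 0 - q) ^ 2 + (if rh < 0 then 2 * c * max (Rp + r) 0 else 0)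
      ≤ (Rp - q) ^ 2 + (if rh < 0 then 2 * c * Rp else 0) + 2 * r * Rp - 2 * r * q
        + noiseWeight c rh * E := by
  have hproj := sq_max_sub_le (z := Rp + r) hq
  have hnoise := sq_sub_sq_min_le hRp hr hrh hE
  have hexp : (Rp + r - q) ^ 2 = (Rp - q) ^ 2 + 2 * r * Rp - 2 * r * q + r ^ 2 := by ring
  split_ifs at hnoise ⊢ <;> linarith

section rmPlus

variable {k : ℕ}

noncomputable def rmPotential (θ c : ℝ) (ph rh R : Fin k → ℝ) : ℝ :=
  ∑ i, ((R i - θ * ph i) ^ 2 + if rh i < 0 then 2 * c * R i else 0)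

lemma rmPotential_step {θ c E : ℝ} {ph rh Rp r : Fin k → ℝ} (hθ : 0 ≤ θ) (hph : ∀ i, 0 ≤ ph i)
    (hRp : ∀ i, 0 ≤ Rp i) (horth : ∑ i, r i * Rp i = 0) (hr : ∀ i, |r i| ≤ c)
    (hrh : ∀ i, rh i ≤ 0) (hE : ∀ i, (r i - rh i) ^ 2 ≤ E) :
    rmPotential θ c ph rh (fun i => max (Rp i + r i) 0) + 2 * θ * ∑ i, r i * ph i
      ≤ rmPotential θ c ph rh Rp + (∑ i, noiseWeight c (rh i)) * E := by
  have key i := rmPlus_coord_step (mul_nonneg hθ (hph i)) (hRp i) (hr i) (hrh i) (hE i)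
  calc _ = ∑ i, ((max (Rp i + r i) 0 - θ * ph i) ^ 2
          + (if rh i < 0 then 2 * c * max (Rp i + r i) 0 else 0) + 2 * r i * (θ * ph i)) := by
        simp only [rmPotential, mul_sum, ← sum_add_distrib]
        exact sum_congr rfl fun i _ => by ring
    _ ≤ ∑ i, ((Rp i - θ * ph i) ^ 2 + (if rh i < 0 then 2 * c * Rp i else 0)
          + 2 * (r i * Rp i) + noiseWeight c (rh i) * E) :=
        sum_le_sum fun i _ => by linarith [key i]
    _ = _ := by
        simp only [rmPotential, sum_add_distrib, ← mul_sum, ← sum_mul, horth]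
        ring

variable {R r : ℕ → Fin k → ℝ}

lemma rmPlus_nonneg (hR0 : R 0 = 0)
    (hR : ∀ t, 1 ≤ t → R t = fun i => max (R (t - 1) i + r t i) 0) (t : ℕ) (i : Fin k) :
    0 ≤ R t i := by
  rcases Nat.eq_zero_or_pos t with rfl | ht
  · simp [hR0]
  · rw [hR t ht]; exact le_max_right _ _

lemma rmPlus_regret_le {E : ℕ → ℝ} {θ c : ℝ} {ph rh : Fin k → ℝ} (hR0 : R 0 = 0)
    (hR : ∀ t, 1 ≤ t → R t = fun i => max (R (t - 1) i + r t i) 0)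
    (horth : ∀ t, 1 ≤ t → ∑ i, r t i * R (t - 1) i = 0) (hr : ∀ t, 1 ≤ t → ∀ i, |r t i| ≤ c)
    (hrh : ∀ i, rh i ≤ 0) (hE : ∀ t, 1 ≤ t → ∀ i, (r t i - rh i) ^ 2 ≤ E t) (hθ : 0 ≤ θ)
    (hph : ph ∈ stdSimplex ℝ (Fin k)) (T : ℕ) :
    2 * θ * ∑ t ∈ Icc 1 T, ∑ i, r t i * ph i
      ≤ θ ^ 2 + (∑ i, noiseWeight c (rh i)) * ∑ t ∈ Icc 1 T, E t := by
  have htel : ∀ S, rmPotential θ c ph rh (R S) + 2 * θ * ∑ t ∈ Icc 1 S, ∑ i, r t i * ph i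
      ≤ rmPotential θ c ph rh (R 0) + (∑ i, noiseWeight c (rh i)) * ∑ t ∈ Icc 1 S, E t := by
    intro S
    induction S with
    | zero => simp
    | succ S ih =>
      have hstep := rmPotential_step hθ hph.1 (rmPlus_nonneg hR0 hR S) (horth (S + 1) (by omega))
        (hr (S + 1) (by omega)) hrh (hE (S + 1) (by omega))
      rw [hR (S + 1) (by omega), Nat.add_sub_cancel, sum_Icc_succ_top (by omega),
        sum_Icc_succ_top (by omega)]
      linarith
  have h0 : rmPotential θ c ph rh (R 0) ≤ θ ^ 2 := by
    have : rmPotential θ c ph rh (R 0) = θ ^ 2 * sqnorm ph := by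
      simp only [rmPotential, hR0, sqnorm, mul_sum]
      exact sum_congr rfl fun i _ => by simp; ring
    rw [this]
    nlinarith [sqnorm_le_one_of_mem_stdSimplex hph, sq_nonneg θ]
  have hT : 0 ≤ rmPotential θ c ph rh (R T) := by
    refine sum_nonneg fun i _ => add_nonneg (sq_nonneg _) ?_
    have hc : 0 ≤ c := (abs_nonneg _).trans (hr 1 le_rfl i)
    split_ifs
    exacts [mul_nonneg (by positivity) (rmPlus_nonneg hR0 hR T i), le_rfl]
  linarith [htel T]

end rmPlus

section rmPlusIterates

variable {k : ℕ} {R : ℕ → Fin k → ℝ} {p : ℕ → Fin k → ℝ}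

lemma rmPlus_mem_stdSimplex (hp1 : p 1 ∈ stdSimplex ℝ (Fin k)) (hRnn : ∀ t i, 0 ≤ R t i)
    (hpu : ∀ t, 1 ≤ t → p (t + 1) = if 0 < ∑ i, |R t i| then (fun i => R t i / ∑ i', |R t i'|)
      else fun _ => 1 / (k : ℝ)) (t : ℕ) (ht : 1 ≤ t) : p t ∈ stdSimplex ℝ (Fin k) := by
  have hk : (0 : ℝ) < k := Nat.cast_pos.2 <| Nat.pos_of_ne_zero <| by rintro rfl; simpa using hp1.2
  obtain ⟨s, rfl⟩ := Nat.exists_eq_add_of_le' ht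
  rcases Nat.eq_zero_or_pos s with rfl | hs
  · exact hp1
  rw [hpu s hs]
  split_ifs with hQ
  · refine ⟨fun i => div_nonneg (hRnn s i) hQ.le, ?_⟩
    rw [← sum_div, div_eq_one_iff_eq hQ.ne']
    exact sum_congr rfl fun i _ => (abs_of_nonneg (hRnn s i)).symm
  · refine ⟨fun _ => by positivity, ?_⟩
    simp [hk.ne']

lemma rmPlus_prev_eq_smul (hR0 : R 0 = 0)
    (hpu : ∀ t, 1 ≤ t → p (t + 1) = if 0 < ∑ i, |R t i| then (fun i => R t i / ∑ i', |R t i'|)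
      else fun _ => 1 / (k : ℝ)) (t : ℕ) (ht : 1 ≤ t) : ∃ a : ℝ, R (t - 1) = a • p t := by
  obtain ⟨s, rfl⟩ := Nat.exists_eq_add_of_le' ht
  rw [Nat.add_sub_cancel]
  rcases Nat.eq_zero_or_pos s with rfl | hs
  · exact ⟨0, by simp [hR0]⟩
  rw [hpu s hs]
  split_ifs with hQ
  · refine ⟨∑ i', |R s i'|, funext fun i => ?_⟩
    simp only [Pi.smul_apply, smul_eq_mul]
    field_simp
  · refine ⟨0, funext fun i => ?_⟩
    have hsum : ∑ i', |R s i'| = 0 := le_antisymm (not_lt.mp hQ) (sum_nonneg fun _ _ => abs_nonneg _)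
    simpa using (sum_eq_zero_iff_of_nonneg fun _ _ => abs_nonneg _).mp hsum i (mem_univ i)

lemma rmPlus_sum_imRegret_mul_prev (hR0 : R 0 = 0)
    (hpu : ∀ t, 1 ≤ t → p (t + 1) = if 0 < ∑ i, |R t i| then (fun i => R t i / ∑ i', |R t i'|)
      else fun _ => 1 / (k : ℝ)) (hp : ∀ t, 1 ≤ t → p t ∈ stdSimplex ℝ (Fin k))
    (ℓ : ℕ → Fin k → ℝ) (t : ℕ) (ht : 1 ≤ t) :
    ∑ i, imRegret (ℓ t) (p t) i * R (t - 1) i = 0 := by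
  obtain ⟨a, ha⟩ := rmPlus_prev_eq_smul hR0 hpu t ht
  simp only [ha, Pi.smul_apply, smul_eq_mul, mul_left_comm _ a, ← mul_sum,
    sum_imRegret_mul_self _ (hp t ht).2, mul_zero]

end rmPlusIterates

theorem IsSaddle.exists_rmPlus_regret_le {n m : ℕ} {U : Matrix (Fin n) (Fin m) ℝ} {μ : ℝ}
    {xr xh : Fin n → ℝ} {yr yh : Fin m → ℝ} (hsad : IsSaddle U μ xr yr xh yh) (hμ : 0 ≤ μ)
    (hxr : xr ∈ stdSimplex ℝ (Fin n)) {x : ℕ → Fin n → ℝ} {y : ℕ → Fin m → ℝ}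
    {R : ℕ → Fin n → ℝ} (hx : ∀ t, 1 ≤ t → x t ∈ stdSimplex ℝ (Fin n))
    (hy : ∀ t, 1 ≤ t → y t ∈ stdSimplex ℝ (Fin m)) (hR0 : R 0 = 0)
    (hR : ∀ t, 1 ≤ t →
      R t = fun i => max (R (t - 1) i + imRegret (lossX U μ xr (x t) (y t)) (x t) i) 0)
    (hxu : ∀ t, 1 ≤ t → x (t + 1) = if 0 < ∑ i, |R t i| then (fun i => R t i / ∑ i', |R t i'|)
      else fun _ => 1 / (n : ℝ)) :
    ∃ B, 0 ≤ B ∧ ∀ θ, 0 ≤ θ → ∀ T,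
      2 * θ * ∑ t ∈ Icc 1 T, ∑ i, imRegret (lossX U μ xr (x t) (y t)) (x t) i * xh i
        ≤ θ ^ 2 + B * ∑ t ∈ Icc 1 T, (sqnorm (x t - xh) + sqnorm (y t - yh)) := by
  obtain ⟨hxh, hyh, -, -⟩ := id hsad
  obtain ⟨M, hM, hU⟩ : ∃ M, 0 ≤ M ∧ ∀ i j, |U i j| ≤ M :=
    ⟨_, sum_nonneg fun _ _ => sum_nonneg fun _ _ => abs_nonneg _, abs_le_sum_sum_abs U⟩
  set L := 18 * (n + m) * (M + μ) ^ 2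
  set W := ∑ i, noiseWeight (2 * (M + μ)) (imRegret (lossX U μ xr xh yh) xh i)
  refine ⟨W * L, mul_nonneg (sum_nonneg fun i _ => noiseWeight_nonneg _ _) (by positivity),
    fun θ hθ T => ?_⟩
  have h := rmPlus_regret_le (E := fun t => L * (sqnorm (x t - xh) + sqnorm (y t - yh)))
    hR0 hR (rmPlus_sum_imRegret_mul_prev hR0 hxu hx _)
    (fun t ht => abs_imRegret_le (abs_lossX_le hU hμ hxr (hx t ht) (hy t ht)) (hx t ht))
    hsad.imRegret_lossX_nonpos
    (fun t ht => sq_imRegret_lossX_sub_le hU hM hμ hxr (hx t ht) hxh hyh) hθ hxh T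
  calc _ ≤ _ := h
    _ = _ := by rw [← mul_sum]; ring

lemma sum_le_of_forall_regret_le {μ Bx By : ℝ} {d ρx ρy : ℕ → ℝ} (hμ : 0 < μ) (hBx : 0 ≤ Bx)
    (hBy : 0 ≤ By) (hd : ∀ t, 0 ≤ d t) (hρ : ∀ t, 1 ≤ t → μ * d t ≤ ρx t + ρy t)
    (hX : ∀ θ, 0 ≤ θ → ∀ T, 2 * θ * ∑ t ∈ Icc 1 T, ρx t ≤ θ ^ 2 + Bx * ∑ t ∈ Icc 1 T, d t)
    (hY : ∀ θ, 0 ≤ θ → ∀ T, 2 * θ * ∑ t ∈ Icc 1 T, ρy t ≤ θ ^ 2 + By * ∑ t ∈ Icc 1 T, d t)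
    (T : ℕ) : ∑ t ∈ Icc 1 T, d t ≤ 2 * ((Bx + By + 1) / μ) ^ 2 := by
  set θ := (Bx + By + 1) / μ
  have hθ : 0 ≤ θ := by positivity
  have hθμ : θ * μ = Bx + By + 1 := div_mul_cancel₀ _ hμ.ne'
  have hD : 0 ≤ ∑ t ∈ Icc 1 T, d t := sum_nonneg fun t _ => hd t
  have hS : μ * ∑ t ∈ Icc 1 T, d t ≤ ∑ t ∈ Icc 1 T, ρx t + ∑ t ∈ Icc 1 T, ρy t := by
    rw [mul_sum, ← sum_add_distrib]
    exact sum_le_sum fun t ht => hρ t (mem_Icc.1 ht).1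
  nlinarith [hX θ hθ T, hY θ hθ T, mul_le_mul_of_nonneg_left hS (by positivity : 0 ≤ 2 * θ)]

lemma exists_mem_Icc_le_div_of_sum_le {d : ℕ → ℝ} {K : ℝ} {T : ℕ} (hT : 1 ≤ T)
    (h : ∑ t ∈ Icc 1 T, d t ≤ K) : ∃ t ∈ Icc 1 T, d t ≤ K / T := by
  refine exists_le_of_sum_le (nonempty_Icc.2 hT) (h.trans_eq ?_)
  have : (T : ℝ) ≠ 0 := by positivity
  simp only [sum_const, Nat.card_Icc, add_tsub_cancel_right, nsmul_eq_mul]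
  field_simp

theorem rtrm_plus_best_iterate_general
    {n m : ℕ}
    (U : Matrix (Fin n) (Fin m) ℝ) (μ : ℝ) (hμ : 0 < μ)
    (xr : Fin n → ℝ) (yr : Fin m → ℝ)
    (hxr : xr ∈ stdSimplex ℝ (Fin n)) (hyr : yr ∈ stdSimplex ℝ (Fin m))
    (xh : Fin n → ℝ) (yh : Fin m → ℝ)
    (hsad : IsSaddle U μ xr yr xh yh)
    (x : ℕ → Fin n → ℝ) (y : ℕ → Fin m → ℝ)
    (Rx : ℕ → Fin n → ℝ) (Ry : ℕ → Fin m → ℝ)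
    (hx1 : x 1 ∈ stdSimplex ℝ (Fin n)) (hy1 : y 1 ∈ stdSimplex ℝ (Fin m))
    (hRx0 : Rx 0 = 0) (hRy0 : Ry 0 = 0)
    (hRx : ∀ t : ℕ, 1 ≤ t →
      Rx t = fun i => max (Rx (t - 1) i + imRegret (lossX U μ xr (x t) (y t)) (x t) i) 0)
    (hRy : ∀ t : ℕ, 1 ≤ t →
      Ry t = fun j => max (Ry (t - 1) j + imRegret (lossY U μ yr (x t) (y t)) (y t) j) 0)
    (hxu : ∀ t : ℕ, 1 ≤ t →
      x (t + 1) = if 0 < ∑ i, |Rx t i| then (fun i => Rx t i / ∑ i', |Rx t i'|)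
        else fun _ => 1 / (n : ℝ))
    (hyu : ∀ t : ℕ, 1 ≤ t →
      y (t + 1) = if 0 < ∑ j, |Ry t j| then (fun j => Ry t j / ∑ j', |Ry t j'|)
        else fun _ => 1 / (m : ℝ)) :
    ∃ C : ℝ, 0 < C ∧ ∀ T : ℕ, 1 ≤ T → ∃ t : ℕ, 1 ≤ t ∧ t ≤ T ∧
      pnorm (xh - x t) (yh - y t) ≤ C / Real.sqrt T := by
  have hx := rmPlus_mem_stdSimplex hx1 (rmPlus_nonneg hRx0 hRx) hxu
  have hy := rmPlus_mem_stdSimplex hy1 (rmPlus_nonneg hRy0 hRy) hyu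
  obtain ⟨Bx, hBx, hX⟩ := hsad.exists_rmPlus_regret_le hμ.le hxr hx hy hRx0 hRx hxu
  obtain ⟨By, hBy, hY⟩ := hsad.swap.exists_rmPlus_regret_le hμ.le hyr hy hx hRy0
    (by simpa only [lossY_eq_lossX_neg_transpose] using hRy) hyu
  simp only [← lossY_eq_lossX_neg_transpose, add_comm (sqnorm (y _ - yh))] at hY
  have hsum := sum_le_of_forall_regret_le hμ hBx hBy
    (fun t => add_nonneg (sqnorm_nonneg (x t - xh)) (sqnorm_nonneg (y t - yh)))
    (fun t ht => hsad.mul_sqnorm_add_sqnorm_le (hx t ht) (hy t ht)) hX hY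
  set K := 2 * ((Bx + By + 1) / μ) ^ 2
  refine ⟨Real.sqrt K, Real.sqrt_pos.2 (by positivity), fun T hT => ?_⟩
  obtain ⟨t, ht, hle⟩ := exists_mem_Icc_le_div_of_sum_le hT (hsum T)
  refine ⟨t, (mem_Icc.1 ht).1, (mem_Icc.1 ht).2, ?_⟩
  rw [pnorm, sqnorm_sub_comm xh, sqnorm_sub_comm yh, ← Real.sqrt_div' _ T.cast_nonneg]
  exact Real.sqrt_le_sqrt hle

/-- Best-iterate convergence of RTRM+ in an SCCP. -/
theorem rtrm_plus_best_iterate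
    {n m : ℕ} (hn : 0 < n) (hm : 0 < m)
    (U : Matrix (Fin n) (Fin m) ℝ) (μ : ℝ) (hμ : 0 < μ)
    (xr : Fin n → ℝ) (yr : Fin m → ℝ)
    (hxr : xr ∈ stdSimplex ℝ (Fin n)) (hyr : yr ∈ stdSimplex ℝ (Fin m))
    (xh : Fin n → ℝ) (yh : Fin m → ℝ)
    (hsad : IsSaddle U μ xr yr xh yh)
    (x : ℕ → Fin n → ℝ) (y : ℕ → Fin m → ℝ)
    (Rx : ℕ → Fin n → ℝ) (Ry : ℕ → Fin m → ℝ)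
    (hx1 : x 1 ∈ stdSimplex ℝ (Fin n)) (hy1 : y 1 ∈ stdSimplex ℝ (Fin m))
    (hRx0 : Rx 0 = 0) (hRy0 : Ry 0 = 0)
    (hRx : ∀ t : ℕ, 1 ≤ t →
      Rx t = fun i => max (Rx (t - 1) i + imRegret (lossX U μ xr (x t) (y t)) (x t) i) 0)
    (hRy : ∀ t : ℕ, 1 ≤ t →
      Ry t = fun j => max (Ry (t - 1) j + imRegret (lossY U μ yr (x t) (y t)) (y t) j) 0)
    (hxu : ∀ t : ℕ, 1 ≤ t →
      x (t + 1) = if 0 < ∑ i, |Rx t i| then (fun i => Rx t i / ∑ i', |Rx t i'|)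
        else fun _ => 1 / (n : ℝ))
    (hyu : ∀ t : ℕ, 1 ≤ t →
      y (t + 1) = if 0 < ∑ j, |Ry t j| then (fun j => Ry t j / ∑ j', |Ry t j'|)
        else fun _ => 1 / (m : ℝ)) :
    ∃ C : ℝ, 0 < C ∧ ∀ T : ℕ, 1 ≤ T → ∃ t : ℕ, 1 ≤ t ∧ t ≤ T ∧
      pnorm (xh - x t) (yh - y t) ≤ C / Real.sqrt T :=
  rtrm_plus_best_iterate_general U μ hμ xr yr hxr hyr xh yh hsad x y Rx Ry hx1 hy1 hRx0 hRy0 hRx hRy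
    hxu hyu
end

section
/- Let K > 0 and let (a_n)_{n≥0} be a sequence of nonnegative real numbers such that for every n ≥ 1, a_n ≤ a_{n−1}, and whenever a_n > 0 one has a_{n−1} − a_n ≥ K/(a_{n−1} + a_n). Then a_n → 0 as n → ∞. -/
/-!
Multiplying the decrement bound by `a (k-1) + a k` gives `a k ^ 2 + K ≤ a (k-1) ^ 2`, so the
squares drop by at least `K` at every step at which the sequence is positive, and a positive term
has a positive predecessor. Hence `a n > 0` forces `n * K ≤ a 0 ^ 2`: the sequence vanishes from
some index on.
-/

open Filter

theorem sq_add_le_sq_of_div_le_sub {K x y : ℝ} (hx : 0 ≤ x) (hy : 0 < y)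
    (h : K / (x + y) ≤ x - y) : y ^ 2 + K ≤ x ^ 2 := by
  have hxy : 0 < x + y := by linarith
  have : K ≤ (x - y) * (x + y) := (div_le_iff₀ hxy).mp h
  nlinarith

section

variable {K : ℝ} {a : ℕ → ℝ} (hnonneg : ∀ n, 0 ≤ a n)
  (hstep : ∀ n, 0 < a (n + 1) → K / (a n + a (n + 1)) ≤ a n - a (n + 1))
include hnonneg hstep

theorem sq_add_mul_le_sq_zero_of_pos (hK : 0 ≤ K) :
    ∀ n, 0 < a n → a n ^ 2 + n * K ≤ a 0 ^ 2
  | 0, _ => by simp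
  | n + 1, hpos => by
    have hsq := sq_add_le_sq_of_div_le_sub (hnonneg n) hpos (hstep n hpos)
    have hprev : 0 < a n := by
      refine (hnonneg n).lt_of_ne fun h0 => ?_
      rw [← h0] at hsq
      nlinarith
    have ih := sq_add_mul_le_sq_zero_of_pos hK n hprev
    push_cast
    linarith

theorem eventually_eq_zero_of_sq_decrement (hK : 0 < K) : ∀ᶠ n in atTop, a n = 0 := by
  obtain ⟨N, hN⟩ := exists_nat_gt (a 0 ^ 2 / K)
  filter_upwards [eventually_ge_atTop N] with n hn
  refine le_antisymm (not_lt.mp fun hpos => ?_) (hnonneg n)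
  have hbound := sq_add_mul_le_sq_zero_of_pos hnonneg hstep hK.le n hpos
  have hnK : (n : ℝ) * K ≤ a 0 ^ 2 := by nlinarith [sq_nonneg (a n)]
  have : (N : ℝ) ≤ n := by exact_mod_cast hn
  linarith [(le_div_iff₀ hK).mpr hnK]

end

theorem seq_tendsto_zero_general (K : ℝ) (hK : 0 < K) (a : ℕ → ℝ)
    (hnonneg : ∀ k : ℕ, 0 ≤ a k)
    (hdec : ∀ k : ℕ, 1 ≤ k → 0 < a k → K / (a (k - 1) + a k) ≤ a (k - 1) - a k) :
    Filter.Tendsto a Filter.atTop (nhds 0) := by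
  have hstep : ∀ n, 0 < a (n + 1) → K / (a n + a (n + 1)) ≤ a n - a (n + 1) :=
    fun n => hdec (n + 1) le_add_self
  exact tendsto_const_nhds.congr'
    ((eventually_eq_zero_of_sq_decrement hnonneg hstep hK).mono fun _ h => h.symm)

/-- A nonincreasing nonnegative sequence whose decrements are bounded below by
K over the sum of consecutive terms (whenever the current term is positive)
converges to zero. -/
theorem seq_tendsto_zero (K : ℝ) (hK : 0 < K) (a : ℕ → ℝ)
    (hnonneg : ∀ k : ℕ, 0 ≤ a k)
    (hmono : ∀ k : ℕ, 1 ≤ k → a k ≤ a (k - 1))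
    (hdec : ∀ k : ℕ, 1 ≤ k → 0 < a k → K / (a (k - 1) + a k) ≤ a (k - 1) - a k) :
    Filter.Tendsto a Filter.atTop (nhds 0) :=
  seq_tendsto_zero_general K hK a hnonneg hdec
end
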